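/- Let s ≥ 0 and let a ∈ h^{s}(ℤ), b ∈ h^{s}(ℤ) be two-sided sequences with a(0) = b(0) = 0. Define c(k) = a(k)/k and d(k) = b(k)/k for k ≠ 0, c(0) = d(0) = 0. Then the convolution c∗d is well defined and the subsequence {(c∗d)(2n)}_{n∈ℕ} belongs to h^{1+s}(ℕ), with norm bounded by C‖a‖_{h^s}‖b‖_{h^s}. -/

import Mathlib

open scoped BigOperators

/-- Membership in the weighted space `h^σ(ℤ)` with weight `(1+2|k|)^σ`. -/
def memH (σ : ℝ) (a : ℤ → ℂ) : Prop :=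
  Summable fun k : ℤ => ((1 + 2 * |(k : ℝ)|) ^ σ) ^ 2 * ‖a k‖ ^ 2

/-- The norm of `h^σ(ℤ)`. -/
noncomputable def hNorm (σ : ℝ) (a : ℤ → ℂ) : ℝ :=
  Real.sqrt (∑' k : ℤ, ((1 + 2 * |(k : ℝ)|) ^ σ) ^ 2 * ‖a k‖ ^ 2)

/-- Convolution of two-sided sequences. -/
noncomputable def conv (a b : ℤ → ℂ) : ℤ → ℂ := fun k => ∑' j : ℤ, a (k - j) * b j

/-!
Dividing by `k` gains one power of the weight, since `1 + 2|k| ≤ 3|k|` for `k ≠ 0`; so `a/k` and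
`b/k` lie in `h^{1+s}`, and the claim follows from `h^σ(ℤ)` being an algebra under convolution for
`σ > 1/2`. For that, subadditivity of the weight gives
`(1+2|m|)^σ ≤ 2^σ ((1+2|m-j|)^σ + (1+2|j|)^σ)`, which splits the weighted convolution into two
convolutions of an `ℓ²` sequence with an `ℓ¹` sequence; these are bounded by Young's inequality,
and `h^σ ⊂ ℓ¹` by Cauchy–Schwarz because `∑ (1+2|k|)^(-2σ) < ∞`. The even subsequence is dominated
by the full sum. All norms are computed in `ℝ≥0∞`, so summability only has to be recovered at the
end.
-/

open scoped ENNReal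

theorem ENNReal.tsum_mul_sq_le {ι : Type*} (f g : ι → ℝ≥0∞) :
    (∑' i, f i * g i) ^ 2 ≤ (∑' i, f i ^ 2) * ∑' i, g i ^ 2 := by
  let _ : MeasurableSpace ι := ⊤
  have h := ENNReal.lintegral_mul_le_Lp_mul_Lq
    (MeasureTheory.Measure.count : MeasureTheory.Measure ι) Real.HolderConjugate.two_two
    (f := f) (g := g) measurable_from_top.aemeasurable measurable_from_top.aemeasurable
  simp only [MeasureTheory.lintegral_count, Pi.mul_apply, ENNReal.rpow_two] at h
  calc (∑' i, f i * g i) ^ 2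
      ≤ ((∑' i, f i ^ 2) ^ (1 / 2 : ℝ) * (∑' i, g i ^ 2) ^ (1 / 2 : ℝ)) ^ 2 := by gcongr
    _ = (∑' i, f i ^ 2) * ∑' i, g i ^ 2 := by
      rw [mul_pow, ← ENNReal.rpow_two, ← ENNReal.rpow_two, ← ENNReal.rpow_mul, ← ENNReal.rpow_mul]
      norm_num

theorem ENNReal.tsum_conv_sq_le {G : Type*} [AddGroup G] (X Y : G → ℝ≥0∞) :
    ∑' m, (∑' j, X (m - j) * Y j) ^ 2 ≤ (∑' k, X k ^ 2) * (∑' j, Y j) ^ 2 := by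
  have pointwise (m : G) :
      (∑' j, X (m - j) * Y j) ^ 2 ≤ (∑' j, X (m - j) ^ 2 * Y j) * ∑' j, Y j := by
    have hY (j : G) : Y j = (Y j ^ (1 / 2 : ℝ)) ^ 2 := by
      rw [← ENNReal.rpow_two, ← ENNReal.rpow_mul]; norm_num
    calc (∑' j, X (m - j) * Y j) ^ 2
        = (∑' j, X (m - j) * Y j ^ (1 / 2 : ℝ) * Y j ^ (1 / 2 : ℝ)) ^ 2 := by
          simp_rw [mul_assoc, ← sq, ← hY]
      _ ≤ (∑' j, (X (m - j) * Y j ^ (1 / 2 : ℝ)) ^ 2) * ∑' j, (Y j ^ (1 / 2 : ℝ)) ^ 2 :=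
          ENNReal.tsum_mul_sq_le _ _
      _ = (∑' j, X (m - j) ^ 2 * Y j) * ∑' j, Y j := by simp_rw [mul_pow, ← hY]
  calc ∑' m, (∑' j, X (m - j) * Y j) ^ 2
      ≤ ∑' m, (∑' j, X (m - j) ^ 2 * Y j) * ∑' j, Y j := ENNReal.tsum_le_tsum pointwise
    _ = (∑' j, ∑' m, X (m - j) ^ 2 * Y j) * ∑' j, Y j := by
      rw [ENNReal.tsum_mul_right, ENNReal.tsum_comm]
    _ = (∑' k, X k ^ 2) * (∑' j, Y j) ^ 2 := by
      have hshift (j : G) : ∑' m, X (m - j) ^ 2 = ∑' k, X k ^ 2 :=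
        (Equiv.subRight j).tsum_eq fun k => X k ^ 2
      simp_rw [ENNReal.tsum_mul_right, hshift, ENNReal.tsum_mul_left]
      ring

theorem ENNReal.add_sq_le (a b : ℝ≥0∞) : (a + b) ^ 2 ≤ 2 * (a ^ 2 + b ^ 2) := by
  have h := ENNReal.rpow_add_le_mul_rpow_add_rpow a b one_le_two
  norm_num [ENNReal.rpow_two] at h
  exact h

lemma Real.summable_and_tsum_le_of_tsum_ofReal_le {ι : Type*} {f : ι → ℝ} (hf : ∀ i, 0 ≤ f i)
    {B : ℝ≥0∞} (hB : B ≠ ∞) (h : ∑' i, ENNReal.ofReal (f i) ≤ B) :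
    Summable f ∧ ∑' i, f i ≤ B.toReal := by
  have hsum : Summable f := by
    simpa only [ENNReal.toReal_ofReal (hf _)] using
      ENNReal.summable_toReal (ne_top_of_le_ne_top hB h)
  rw [← ENNReal.ofReal_tsum_of_nonneg hf hsum, ENNReal.ofReal_le_iff_le_toReal hB] at h
  exact ⟨hsum, h⟩

noncomputable def hWeight (k : ℤ) : ℝ≥0∞ := ENNReal.ofReal (1 + 2 * |(k : ℝ)|)

noncomputable def hNormSq (σ : ℝ) (f : ℤ → ℂ) : ℝ≥0∞ := ∑' k, (hWeight k ^ σ * ‖f k‖ₑ) ^ 2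

noncomputable def hWeightSum (σ : ℝ) : ℝ≥0∞ := ∑' k, hWeight k ^ (-(2 * σ))

lemma one_le_hWeight (k : ℤ) : 1 ≤ hWeight k :=
  ENNReal.one_le_ofReal.2 (by have := abs_nonneg (k : ℝ); linarith)

lemma hWeight_ne_top (k : ℤ) : hWeight k ≠ ∞ := ENNReal.ofReal_ne_top

lemma hWeight_ne_zero (k : ℤ) : hWeight k ≠ 0 := (zero_lt_one.trans_le (one_le_hWeight k)).ne'

lemma hWeight_le_add (m j : ℤ) : hWeight m ≤ hWeight (m - j) + hWeight j := by
  unfold hWeight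
  rw [← ENNReal.ofReal_add (by positivity) (by positivity)]
  apply ENNReal.ofReal_le_ofReal
  have := abs_add_le ((m : ℝ) - j) j
  push_cast
  simp only [sub_add_cancel] at this
  linarith

lemma hWeight_rpow_le {σ : ℝ} (hσ : 0 ≤ σ) (m j : ℤ) :
    hWeight m ^ σ ≤ 2 ^ σ * (hWeight (m - j) ^ σ + hWeight j ^ σ) :=
  (ENNReal.rpow_le_rpow (hWeight_le_add m j) hσ).trans
    (ENNReal.add_rpow_le_two_rpow_mul_rpow_add_rpow _ _ hσ)

lemma hWeight_le_three_mul_enorm {k : ℤ} (hk : k ≠ 0) : hWeight k ≤ 3 * ‖(k : ℂ)‖ₑ := by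
  have h1 : (1 : ℝ) ≤ |(k : ℝ)| := by exact_mod_cast Int.one_le_abs hk
  rw [hWeight, ← ofReal_norm, Complex.norm_intCast, ← ENNReal.ofReal_ofNat,
    ← ENNReal.ofReal_mul (by norm_num)]
  exact ENNReal.ofReal_le_ofReal (by linarith)

lemma hWeightSum_ne_top {σ : ℝ} (hσ : 1 / 2 < σ) : hWeightSum σ ≠ ∞ := by
  have hdom : Summable fun k : ℤ => 1 / |k + (1 / 2 : ℝ)| ^ (2 * σ) :=
    (Real.summable_one_div_int_add_rpow _ _).2 (by linarith)
  have hsum : Summable fun k : ℤ => (1 + 2 * |(k : ℝ)|) ^ (-(2 * σ)) := by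
    refine hdom.of_nonneg_of_le (fun k => by positivity) fun k => ?_
    have hk : 0 < |k + (1 / 2 : ℝ)| := abs_pos.2 fun h => by
      have hodd : 2 * k + 1 ≠ 0 := by omega
      exact hodd (by exact_mod_cast (by linarith : 2 * (k : ℝ) + 1 = 0))
    rw [Real.rpow_neg (by positivity), ← one_div]
    gcongr
    have := abs_add_le (k : ℝ) (1 / 2)
    rw [abs_of_pos (by norm_num : (0 : ℝ) < 1 / 2)] at this
    linarith [abs_nonneg (k : ℝ)]
  have hofReal (k : ℤ) :
      hWeight k ^ (-(2 * σ)) = ENNReal.ofReal ((1 + 2 * |(k : ℝ)|) ^ (-(2 * σ))) :=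
    ENNReal.ofReal_rpow_of_pos (by positivity)
  simpa only [hWeightSum, hofReal] using hsum.tsum_ofReal_ne_top

lemma hWeight_rpow_mul_enorm_sq (σ : ℝ) (f : ℤ → ℂ) (k : ℤ) :
    (hWeight k ^ σ * ‖f k‖ₑ) ^ 2 = ENNReal.ofReal (((1 + 2 * |(k : ℝ)|) ^ σ) ^ 2 * ‖f k‖ ^ 2) := by
  rw [hWeight, ENNReal.ofReal_rpow_of_pos (by positivity), ← ofReal_norm,
    ← ENNReal.ofReal_mul (by positivity), ← ENNReal.ofReal_pow (by positivity), mul_pow]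

lemma hNormSq_eq_ofReal {σ : ℝ} {f : ℤ → ℂ} (hf : memH σ f) :
    hNormSq σ f = ENNReal.ofReal (hNorm σ f ^ 2) := by
  rw [hNorm, Real.sq_sqrt (tsum_nonneg fun k => by positivity), hNormSq,
    ENNReal.ofReal_tsum_of_nonneg (fun k => by positivity) hf]
  simp_rw [hWeight_rpow_mul_enorm_sq]

lemma hNormSq_ne_top {σ : ℝ} {f : ℤ → ℂ} (hf : memH σ f) : hNormSq σ f ≠ ∞ := by
  rw [hNormSq_eq_ofReal hf]; exact ENNReal.ofReal_ne_top

lemma tsum_enorm_sq_le (σ : ℝ) (f : ℤ → ℂ) :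
    (∑' k, ‖f k‖ₑ) ^ 2 ≤ hWeightSum σ * hNormSq σ f := by
  have hsplit (k : ℤ) : ‖f k‖ₑ = hWeight k ^ (-σ) * (hWeight k ^ σ * ‖f k‖ₑ) := by
    rw [← mul_assoc, ← ENNReal.rpow_add _ _ (hWeight_ne_zero k) (hWeight_ne_top k),
      neg_add_cancel, ENNReal.rpow_zero, one_mul]
  have hsq (k : ℤ) : (hWeight k ^ (-σ)) ^ 2 = hWeight k ^ (-(2 * σ)) := by
    rw [← ENNReal.rpow_two, ← ENNReal.rpow_mul]; ring_nf
  unfold hWeightSum hNormSq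
  simpa only [← hsplit, hsq] using ENNReal.tsum_mul_sq_le (fun k => hWeight k ^ (-σ))
    (fun k => hWeight k ^ σ * ‖f k‖ₑ)

lemma tsum_enorm_ne_top_of_hNormSq_ne_top {σ : ℝ} (hσ : 1 / 2 < σ) {f : ℤ → ℂ}
    (hf : hNormSq σ f ≠ ∞) : ∑' k, ‖f k‖ₑ ≠ ∞ := fun htop => by
  have := (tsum_enorm_sq_le σ f).trans_lt
    (ENNReal.mul_lt_top (hWeightSum_ne_top hσ).lt_top hf.lt_top)
  simp [htop] at this

lemma hWeight_rpow_mul_enorm_conv_le {σ : ℝ} (hσ : 0 ≤ σ) (c d : ℤ → ℂ) (m : ℤ) :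
    hWeight m ^ σ * ‖conv c d m‖ₑ ≤
      2 ^ σ * (∑' j, hWeight (m - j) ^ σ * ‖c (m - j)‖ₑ * ‖d j‖ₑ +
        ∑' j, hWeight (m - j) ^ σ * ‖d (m - j)‖ₑ * ‖c j‖ₑ) := by
  have hreindex : ∑' j, ‖c (m - j)‖ₑ * (hWeight j ^ σ * ‖d j‖ₑ) =
      ∑' j, hWeight (m - j) ^ σ * ‖d (m - j)‖ₑ * ‖c j‖ₑ := by
    rw [← (Equiv.subLeft m).tsum_eq]
    simp only [Equiv.subLeft_apply, sub_sub_cancel]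
    exact tsum_congr fun j => mul_comm _ _
  calc hWeight m ^ σ * ‖conv c d m‖ₑ
      ≤ hWeight m ^ σ * ∑' j, ‖c (m - j)‖ₑ * ‖d j‖ₑ := by
        gcongr
        simpa only [conv, enorm_mul] using
          enorm_tsum_le_tsum_enorm (f := fun j => c (m - j) * d j)
    _ = ∑' j, hWeight m ^ σ * (‖c (m - j)‖ₑ * ‖d j‖ₑ) := ENNReal.tsum_mul_left.symm
    _ ≤ ∑' j, 2 ^ σ * (hWeight (m - j) ^ σ + hWeight j ^ σ) * (‖c (m - j)‖ₑ * ‖d j‖ₑ) := by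
        gcongr with j
        exact hWeight_rpow_le hσ m j
    _ = 2 ^ σ * (∑' j, hWeight (m - j) ^ σ * ‖c (m - j)‖ₑ * ‖d j‖ₑ +
          ∑' j, ‖c (m - j)‖ₑ * (hWeight j ^ σ * ‖d j‖ₑ)) := by
        rw [← ENNReal.tsum_add, ← ENNReal.tsum_mul_left]
        exact tsum_congr fun j => by ring
    _ = _ := by rw [hreindex]

/-- The algebra property of `h^σ(ℤ)`; the constant is finite exactly when `σ > 1/2`. -/
lemma hNormSq_conv_le {σ : ℝ} (hσ : 0 ≤ σ) (c d : ℤ → ℂ) :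
    hNormSq σ (conv c d) ≤ 4 ^ (σ + 1) * hWeightSum σ * hNormSq σ c * hNormSq σ d := by
  set u : ℤ → ℝ≥0∞ := fun k => hWeight k ^ σ * ‖c k‖ₑ
  set v : ℤ → ℝ≥0∞ := fun k => hWeight k ^ σ * ‖d k‖ₑ
  set P : ℤ → ℝ≥0∞ := fun m => ∑' j, u (m - j) * ‖d j‖ₑ
  set Q : ℤ → ℝ≥0∞ := fun m => ∑' j, v (m - j) * ‖c j‖ₑ
  have hP : ∑' m, P m ^ 2 ≤ hWeightSum σ * hNormSq σ c * hNormSq σ d :=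
    (ENNReal.tsum_conv_sq_le u _).trans <| by
      calc (∑' k, u k ^ 2) * (∑' j, ‖d j‖ₑ) ^ 2 ≤ hNormSq σ c * (hWeightSum σ * hNormSq σ d) := by
            gcongr
            exacts [le_rfl, tsum_enorm_sq_le σ d]
        _ = _ := by ring
  have hQ : ∑' m, Q m ^ 2 ≤ hWeightSum σ * hNormSq σ c * hNormSq σ d :=
    (ENNReal.tsum_conv_sq_le v _).trans <| by
      calc (∑' k, v k ^ 2) * (∑' j, ‖c j‖ₑ) ^ 2 ≤ hNormSq σ d * (hWeightSum σ * hNormSq σ c) := by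
            gcongr
            exacts [le_rfl, tsum_enorm_sq_le σ c]
        _ = _ := by ring
  have hfour : (2 : ℝ≥0∞) ^ σ * 2 ^ σ * 4 = 4 ^ (σ + 1) := by
    rw [← ENNReal.mul_rpow_of_nonneg _ _ hσ, ENNReal.rpow_add _ _ (by norm_num) (by norm_num),
      ENNReal.rpow_one]
    norm_num
  calc hNormSq σ (conv c d) ≤ ∑' m, (2 ^ σ * (P m + Q m)) ^ 2 :=
        ENNReal.tsum_le_tsum fun m => by
          gcongr ?_ ^ 2; exact hWeight_rpow_mul_enorm_conv_le hσ c d m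
    _ ≤ ∑' m, (2 ^ σ) ^ 2 * 2 * (P m ^ 2 + Q m ^ 2) := ENNReal.tsum_le_tsum fun m => by
        rw [mul_pow, mul_assoc]; gcongr; exact ENNReal.add_sq_le _ _
    _ = (2 ^ σ) ^ 2 * 2 * (∑' m, P m ^ 2 + ∑' m, Q m ^ 2) := by
        rw [ENNReal.tsum_mul_left, ENNReal.tsum_add]
    _ ≤ (2 ^ σ) ^ 2 * 2 * (hWeightSum σ * hNormSq σ c * hNormSq σ d +
          hWeightSum σ * hNormSq σ c * hNormSq σ d) := by gcongr
    _ = 4 ^ (σ + 1) * hWeightSum σ * hNormSq σ c * hNormSq σ d := by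
        rw [← hfour]; ring

noncomputable def divByIndex (a : ℤ → ℂ) : ℤ → ℂ := fun k => if k = 0 then 0 else a k / (k : ℂ)

lemma hNormSq_divByIndex_le (σ : ℝ) (a : ℤ → ℂ) :
    hNormSq (1 + σ) (divByIndex a) ≤ 9 * hNormSq σ a := by
  have pointwise (k : ℤ) :
      hWeight k ^ (1 + σ) * ‖divByIndex a k‖ₑ ≤ 3 * (hWeight k ^ σ * ‖a k‖ₑ) := by
    by_cases hk : k = 0
    · simp [divByIndex, hk]
    calc hWeight k ^ (1 + σ) * ‖divByIndex a k‖ₑ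
        = hWeight k / ‖(k : ℂ)‖ₑ * (hWeight k ^ σ * ‖a k‖ₑ) := by
          rw [ENNReal.rpow_add _ _ (hWeight_ne_zero k) (hWeight_ne_top k), ENNReal.rpow_one,
            divByIndex, if_neg hk, div_eq_mul_inv, div_eq_mul_inv, enorm_mul,
            enorm_inv (Int.cast_ne_zero.2 hk)]
          ring
      _ ≤ 3 * (hWeight k ^ σ * ‖a k‖ₑ) := by
          gcongr
          exact ENNReal.div_le_of_le_mul (hWeight_le_three_mul_enorm hk)
  rw [hNormSq, hNormSq, ← ENNReal.tsum_mul_left]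
  refine ENNReal.tsum_le_tsum fun k => ?_
  calc (hWeight k ^ (1 + σ) * ‖divByIndex a k‖ₑ) ^ 2 ≤ (3 * (hWeight k ^ σ * ‖a k‖ₑ)) ^ 2 := by
        gcongr ?_ ^ 2; exact pointwise k
    _ = 9 * (hWeight k ^ σ * ‖a k‖ₑ) ^ 2 := by ring

lemma summable_norm_mul_sub {c d : ℤ → ℂ} (hc : ∑' k, ‖c k‖ₑ ≠ ∞) (hd : ∑' k, ‖d k‖ₑ ≠ ∞)
    (m : ℤ) : Summable fun j => ‖c (m - j) * d j‖ := by
  refine tsum_enorm_ne_top_iff_summable_norm.1 (ne_top_of_le_ne_top (ENNReal.mul_ne_top hc hd) ?_)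
  calc ∑' j, ‖c (m - j) * d j‖ₑ ≤ ∑' j, (∑' k, ‖c k‖ₑ) * ‖d j‖ₑ :=
        ENNReal.tsum_le_tsum fun j => by rw [enorm_mul]; gcongr; exact ENNReal.le_tsum _
    _ = (∑' k, ‖c k‖ₑ) * ∑' k, ‖d k‖ₑ := ENNReal.tsum_mul_left

lemma tsum_ofReal_even_le_hNormSq {σ : ℝ} (hσ : 0 ≤ σ) (f : ℤ → ℂ) :
    ∑' n : ℕ, ENNReal.ofReal (((1 + 2 * ((n : ℝ) + 1)) ^ σ) ^ 2 * ‖f (2 * ((n : ℤ) + 1))‖ ^ 2)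
      ≤ hNormSq σ f := by
  have hinj : Function.Injective fun n : ℕ => 2 * ((n : ℤ) + 1) := fun x y h => by
    simp only at h; omega
  refine (ENNReal.tsum_le_tsum fun n => ?_).trans
    (ENNReal.tsum_comp_le_tsum_of_injective hinj fun m => (hWeight m ^ σ * ‖f m‖ₑ) ^ 2)
  rw [hWeight_rpow_mul_enorm_sq]
  gcongr
  push_cast
  rw [abs_of_pos (by positivity)]
  linarith

lemma hNormSq_conv_divByIndex_le {σ : ℝ} (hσ : 0 ≤ 1 + σ) (a b : ℤ → ℂ) :
    hNormSq (1 + σ) (conv (divByIndex a) (divByIndex b)) ≤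
      4 ^ (1 + σ + 1) * hWeightSum (1 + σ) * 81 * hNormSq σ a * hNormSq σ b :=
  (hNormSq_conv_le hσ _ _).trans <| by
    calc _ ≤ 4 ^ (1 + σ + 1) * hWeightSum (1 + σ) * (9 * hNormSq σ a) * (9 * hNormSq σ b) := by
          gcongr <;> exact hNormSq_divByIndex_le σ _
      _ = _ := by ring

lemma summable_norm_divByIndex_mul_sub {σ : ℝ} (hσ : -(1 / 2) < σ) {a b : ℤ → ℂ}
    (ha : memH σ a) (hb : memH σ b) (m : ℤ) :
    Summable fun j => ‖divByIndex a (m - j) * divByIndex b j‖ := by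
  have hl1 {f : ℤ → ℂ} (hf : memH σ f) : ∑' k, ‖divByIndex f k‖ₑ ≠ ∞ :=
    tsum_enorm_ne_top_of_hNormSq_ne_top (by linarith) <| ne_top_of_le_ne_top
      (ENNReal.mul_ne_top (by norm_num) (hNormSq_ne_top hf)) (hNormSq_divByIndex_le σ f)
  exact summable_norm_mul_sub (hl1 ha) (hl1 hb) m

/-- Division by `k` followed by convolution: the even-indexed subsequence
`{(c∗d)(2n)}_{n∈ℕ}` belongs to `h^{1+s}(ℕ)` with a uniform norm bound. -/
theorem div_convolution_even_subsequence (s : ℝ) (hs : 0 ≤ s) :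
    ∃ C : ℝ, 0 < C ∧ ∀ a b : ℤ → ℂ, memH s a → memH s b → a 0 = 0 → b 0 = 0 →
      (∀ m : ℤ, Summable fun j : ℤ =>
        ‖(if m - j = 0 then 0 else a (m - j) / ((m : ℂ) - (j : ℂ))) *
          (if j = 0 then 0 else b j / (j : ℂ))‖) ∧
      Summable (fun n : ℕ => ((1 + 2 * ((n : ℝ) + 1)) ^ (1 + s)) ^ 2 *
        ‖conv (fun k => if k = 0 then 0 else a k / (k : ℂ))
          (fun k => if k = 0 then 0 else b k / (k : ℂ)) (2 * ((n : ℤ) + 1))‖ ^ 2) ∧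
      Real.sqrt (∑' n : ℕ, ((1 + 2 * ((n : ℝ) + 1)) ^ (1 + s)) ^ 2 *
        ‖conv (fun k => if k = 0 then 0 else a k / (k : ℂ))
          (fun k => if k = 0 then 0 else b k / (k : ℂ)) (2 * ((n : ℤ) + 1))‖ ^ 2) ≤
        C * hNorm s a * hNorm s b := by
  set K : ℝ≥0∞ := 4 ^ (1 + s + 1) * hWeightSum (1 + s) * 81
  have hK : K ≠ ∞ := ENNReal.mul_ne_top (ENNReal.mul_ne_top
    (ENNReal.rpow_ne_top_of_nonneg (by linarith) (by norm_num))
    (hWeightSum_ne_top (by linarith))) (by norm_num)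
  refine ⟨√K.toReal + 1, by positivity, fun a b ha hb _ _ => ?_⟩
  have hab : 0 ≤ hNorm s a * hNorm s b := mul_nonneg (Real.sqrt_nonneg _) (Real.sqrt_nonneg _)
  have hbound := (tsum_ofReal_even_le_hNormSq (by linarith) _).trans <|
    (hNormSq_conv_divByIndex_le (show 0 ≤ 1 + s by linarith) a b).trans_eq <| by
      rw [hNormSq_eq_ofReal ha, hNormSq_eq_ofReal hb, mul_assoc K,
        ← ENNReal.ofReal_mul (by positivity), ← mul_pow]
  obtain ⟨hsum, hle⟩ := Real.summable_and_tsum_le_of_tsum_ofReal_le (fun n => by positivity)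
    (ENNReal.mul_ne_top hK ENNReal.ofReal_ne_top) hbound
  refine ⟨fun m => ?_, hsum, ?_⟩
  · simpa only [divByIndex, Int.cast_sub] using
      summable_norm_divByIndex_mul_sub (by linarith) ha hb m
  calc _ ≤ √(K * ENNReal.ofReal ((hNorm s a * hNorm s b) ^ 2)).toReal := Real.sqrt_le_sqrt hle
    _ = √K.toReal * (hNorm s a * hNorm s b) := by
      rw [ENNReal.toReal_mul, ENNReal.toReal_ofReal (by positivity), Real.sqrt_mul',
        Real.sqrt_sq hab]
      positivity
    _ ≤ (√K.toReal + 1) * hNorm s a * hNorm s b := by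
      rw [mul_assoc]; gcongr; linarith
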